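/- Let u : ℕ → A and v : ℕ → A be infinite words all of whose palindromic factors have length at most p. Let m, m' ≥ 0 and let ℓ ≥ p. Suppose PPL_u(m) = PPL_v(m'), d_u(m+i) = d_v(m'+i) for all 0 ≤ i < p, and u[m+i] = v[m'+i] for all 0 ≤ i < ℓ. Then PPL_u(m+ℓ) = PPL_v(m'+ℓ). (In other words, PPL_u(n) for n ≥ m + p is uniquely determined by PPL_u(m), by d_u(m), …, d_u(m+p−1), and by the factor u[m]⋯u[n−1].) -/
import Mathlib


/-- Prefix `u[0..n-1]` of the infinite word `u`. -/
def wordPrefix {A : Type*} (u : ℕ → A) (n : ℕ) : List A :=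
  List.ofFn (fun i : Fin n => u i)

/-- Factor `u[i..i+ℓ-1]` of the infinite word `u`. -/
def wordFactor {A : Type*} (u : ℕ → A) (i ℓ : ℕ) : List A :=
  List.ofFn (fun j : Fin ℓ => u (i + j))

/-- A palindrome is a word equal to its reversal. -/
def IsPalindrome {A : Type*} (w : List A) : Prop := w.reverse = w

/-- `w` is a concatenation of `k` nonempty palindromes. -/
def IsPalConcat {A : Type*} (w : List A) (k : ℕ) : Prop :=
  ∃ ps : List (List A), ps.length = k ∧ (∀ p ∈ ps, p ≠ [] ∧ IsPalindrome p) ∧ ps.flatten = w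

/-- Prefix palindromic length: the least number of nonempty palindromes whose
concatenation is the prefix of length `n` of `u` (`PPL u 0 = 0`). -/
noncomputable def PPL {A : Type*} (u : ℕ → A) (n : ℕ) : ℕ :=
  sInf {k | IsPalConcat (wordPrefix u n) k}

/-- The PPL-difference sequence `d_u(n) = PPL_u(n+1) - PPL_u(n)`. -/
noncomputable def PPLdiff {A : Type*} (u : ℕ → A) (n : ℕ) : ℤ :=
  (PPL u (n + 1) : ℤ) - (PPL u n : ℤ)

noncomputable def PL {A : Type*} (w : List A) : ℕ := sInf {k | IsPalConcat w k}

lemma PPL_eq_PL {A : Type*} (u : ℕ → A) (n : ℕ) : PPL u n = PL (wordPrefix u n) := rfl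

lemma palconcat_len {A : Type*} (w : List A) : IsPalConcat w w.length := by
  refine ⟨w.map (fun a => [a]), by simp, ?_, ?_⟩
  · intro q hq
    simp only [List.mem_map] at hq
    obtain ⟨a, _, rfl⟩ := hq
    exact ⟨by simp, by simp [IsPalindrome]⟩
  · induction w with
    | nil => simp
    | cons a t ih => simp_all

lemma PL_nonempty {A : Type*} (w : List A) : {k | IsPalConcat w k}.Nonempty :=
  ⟨w.length, palconcat_len w⟩

lemma PL_mem {A : Type*} (w : List A) : IsPalConcat w (PL w) :=
  Nat.sInf_mem (PL_nonempty w)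

lemma PL_le {A : Type*} {w : List A} {k : ℕ} (h : IsPalConcat w k) : PL w ≤ k :=
  Nat.sInf_le h

lemma wordPrefix_split {A : Type*} (u : ℕ → A) (a b : ℕ) :
    wordPrefix u (a + b) = wordPrefix u a ++ wordFactor u a b := by
  apply List.ext_getElem
  · simp [wordPrefix, wordFactor]
  · intro i h1 h2
    simp only [wordPrefix, wordFactor, List.getElem_append, List.getElem_ofFn,
      List.length_ofFn]
    split
    · rfl
    · next h =>
      congr 1
      omega

lemma PL_concat_le {A : Type*} (w' s : List A) (hs : s ≠ []) (hpal : IsPalindrome s) :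
    PL (w' ++ s) ≤ PL w' + 1 := by
  obtain ⟨ps, hlen, hall, hfl⟩ := PL_mem w'
  refine PL_le ⟨ps ++ [s], by simp [hlen], ?_, by simp [hfl]⟩
  intro q hq
  rcases List.mem_append.1 hq with h | h
  · exact hall q h
  · simp at h; subst h; exact ⟨hs, hpal⟩

lemma PL_decompose {A : Type*} (w : List A) (hw : w ≠ []) :
    ∃ (w' s : List A) (k' : ℕ), PL w = k' + 1 ∧ w = w' ++ s ∧ s ≠ [] ∧
      IsPalindrome s ∧ PL w' ≤ k' := by
  obtain ⟨ps, hlen, hall, hfl⟩ := PL_mem w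
  rcases List.eq_nil_or_concat ps with rfl | ⟨qs, s, rfl⟩
  · simp at hfl; exact absurd hfl hw
  · refine ⟨qs.flatten, s, qs.length, ?_, ?_, ?_, ?_, ?_⟩
    · simp at hlen; omega
    · rw [← hfl]; simp
    · exact (hall s (by simp)).1
    · exact (hall s (by simp)).2
    · exact PL_le ⟨qs, rfl, fun q hq => hall q (by simp [hq]), rfl⟩

lemma ppl_step_le {A : Type*} (u v : ℕ → A) (p m m' i : ℕ) (hp : 1 ≤ p) (hpi : p ≤ i)
    (hv : ∀ j ℓ : ℕ, 1 ≤ ℓ → IsPalindrome (wordFactor v j ℓ) → ℓ ≤ p)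
    (hword : ∀ j : ℕ, j < i → u (m + j) = v (m' + j))
    (hIH : ∀ j : ℕ, j < i → PPL u (m + j) ≤ PPL v (m' + j)) :
    PPL u (m + i) ≤ PPL v (m' + i) := by
  have hw : wordPrefix v (m' + i) ≠ [] := by
    simp only [wordPrefix, ne_eq, List.ofFn_eq_nil_iff]
    omega
  obtain ⟨w', s, k', hk, hsplit, hsne, hspal, hw'⟩ := PL_decompose _ hw
  set t := s.length with ht
  have ht1 : 1 ≤ t := List.length_pos_iff.2 hsne
  have hlen : w'.length + t = m' + i := by
    have := congrArg List.length hsplit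
    simp only [List.length_append, wordPrefix, List.length_ofFn] at this
    omega
  have htmi : t ≤ m' + i := by omega
  -- identify w' and s
  have hsplit2 : wordPrefix v (m' + i) = wordPrefix v (m' + i - t) ++ wordFactor v (m' + i - t) t := by
    rw [← wordPrefix_split]; congr 1; omega
  have hse : s = wordFactor v (m' + i - t) t ∧ w' = wordPrefix v (m' + i - t) := by
    have h2 := hsplit.symm.trans hsplit2
    have hl : w'.length = (wordPrefix v (m' + i - t) : List A).length := by
      simp [wordPrefix]; omega
    obtain ⟨e1, e2⟩ := List.append_inj h2 hl
    exact ⟨e2, e1⟩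
  -- s is a palindromic factor of v, so t ≤ p
  have htp : t ≤ p := hv _ t ht1 (hse.1 ▸ hspal)
  have hti : t ≤ i := le_trans htp hpi
  have hmi : m' + i - t = m' + (i - t) := by omega
  -- the matching factor of u
  have hfac : wordFactor u (m + (i - t)) t = s := by
    rw [hse.1, hmi]
    simp only [wordFactor]
    congr 1
    funext j
    have h1 : m + (i - t) + (j:ℕ) = m + ((i - t) + j) := by omega
    have h2 : m' + (i - t) + (j:ℕ) = m' + ((i - t) + j) := by omega
    rw [h1, h2]
    exact hword ((i - t) + j) (by omega)
  have husplit : wordPrefix u (m + i) = wordPrefix u (m + (i - t)) ++ s := by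
    rw [← hfac, ← wordPrefix_split]; congr 1; omega
  calc PPL u (m + i) = PL (wordPrefix u (m + i)) := rfl
    _ ≤ PL (wordPrefix u (m + (i - t))) + 1 := by
        rw [husplit] at *; exact PL_concat_le _ _ hsne hspal
    _ = PPL u (m + (i - t)) + 1 := rfl
    _ ≤ PPL v (m' + (i - t)) + 1 := by
        have := hIH (i - t) (by omega); omega
    _ ≤ k' + 1 := by
        have : PPL v (m' + (i - t)) ≤ k' := by
          rw [PPL_eq_PL, ← hmi, ← hse.2]; exact hw'
        omega
    _ = PPL v (m' + i) := hk.symm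

/-- Let `u` and `v` be infinite words all of whose palindromic factors have length at
most `p`, and let `ℓ ≥ p`. If `PPL_u(m) = PPL_v(m')`, the PPL-differences agree at
`m + i` and `m' + i` for `0 ≤ i < p`, and `u[m+i] = v[m'+i]` for `0 ≤ i < ℓ`, then
`PPL_u(m + ℓ) = PPL_v(m' + ℓ)`. -/
theorem ppl_determined {A : Type*} (u v : ℕ → A) (p : ℕ)
    (hu : ∀ i ℓ : ℕ, 1 ≤ ℓ → IsPalindrome (wordFactor u i ℓ) → ℓ ≤ p)
    (hv : ∀ i ℓ : ℕ, 1 ≤ ℓ → IsPalindrome (wordFactor v i ℓ) → ℓ ≤ p)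
    (m m' ℓ : ℕ) (hℓ : p ≤ ℓ)
    (hPPL : PPL u m = PPL v m')
    (hd : ∀ i : ℕ, i < p → PPLdiff u (m + i) = PPLdiff v (m' + i))
    (hword : ∀ i : ℕ, i < ℓ → u (m + i) = v (m' + i)) :
    PPL u (m + ℓ) = PPL v (m' + ℓ) := by

  have hp1 : 1 <= p := hu 0 1 le_rfl (by simp [IsPalindrome, wordFactor, List.ofFn_succ])
  have base : forall i, i <= p -> PPL u (m + i) = PPL v (m' + i) := by
    intro i hip
    induction i with
    | zero => simpa using hPPL
    | succ j ihj =>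
      have hj := ihj (by omega)
      have hdj := hd j (by omega)
      unfold PPLdiff at hdj
      have hj' : (PPL u (m + j) : Int) = PPL v (m' + j) := by exact_mod_cast hj
      have h1 : m + (j + 1) = m + j + 1 := by omega
      have h2 : m' + (j + 1) = m' + j + 1 := by omega
      rw [h1, h2]
      omega
  have key : forall i, i <= ℓ -> PPL u (m + i) = PPL v (m' + i) := by
    intro i
    induction i using Nat.strong_induction_on with
    | _ i IH =>
      intro hil
      by_cases hip : i <= p
      · exact base i hip
      · push_neg at hip
        have hIH1 : forall j, j < i -> PPL u (m + j) <= PPL v (m' + j) :=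
          fun j hj => (IH j hj (by omega)).le
        have hIH2 : forall j, j < i -> PPL v (m' + j) <= PPL u (m + j) :=
          fun j hj => (IH j hj (by omega)).ge
        exact le_antisymm
          (ppl_step_le u v p m m' i hp1 (by omega) hv (fun j hj => hword j (by omega)) hIH1)
          (ppl_step_le v u p m' m i hp1 (by omega) hu (fun j hj => (hword j (by omega)).symm) hIH2)
  exact key ℓ le_rfl
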